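/- Let C_n be the cycle graph on vertices v₁,...,v_n (edges {v_i,v_{i+1}} indices mod n), with distinguished vertices v₁ and v_t where 3 ≤ t ≤ ⌈n/2⌉. Let X be obtained from C_n by adding a chord between v_i and v_{i+1} where 1 ≤ i < t and (i,t) ≠ (1,2). Then the number of spanning 2-forests of X with one tree containing v₁ and the other containing v_t equals (2t − 3)(n − t + 1). -/

import Mathlib

structure Multigraph where
  V : Type
  E : Type
  [fintypeV : Fintype V]
  [fintypeE : Fintype E]
  [decEqV : DecidableEq V]
  ends : E → Sym2 V

attribute [instance] Multigraph.fintypeV Multigraph.fintypeE Multigraph.decEqV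

namespace Multigraph

variable (G : Multigraph)

/-- Reachability in the spanning subgraph using only the edges in `S`. -/
def Reach (S : Set G.E) : G.V → G.V → Prop :=
  Relation.ReflTransGen (fun x y => ∃ e ∈ S, G.ends e = s(x, y))

/-- The multigraph is connected. -/
def Connected : Prop := ∀ x y : G.V, G.Reach Set.univ x y

/-- The edge set `S` is acyclic: every edge of `S` is a bridge of `S`. -/
def IsForest (S : Finset G.E) : Prop :=
  ∀ e ∈ S, ∀ x y : G.V, G.ends e = s(x, y) → ¬ G.Reach ((↑S : Set G.E) \ {e}) x y

/-- `S` is the edge set of a spanning tree. -/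
def IsSpanningTree (S : Finset G.E) : Prop :=
  G.IsForest S ∧ ∀ x y : G.V, G.Reach ↑S x y

/-- `S` is the edge set of a spanning 2-forest consisting of two trees, one
containing `u`, the other containing `v`, whose vertex sets partition the vertices. -/
def IsTwoForest (u v : G.V) (S : Finset G.E) : Prop :=
  G.IsForest S ∧ ¬ G.Reach ↑S u v ∧ ∀ x : G.V, G.Reach ↑S u x ∨ G.Reach ↑S v x

/-- The number of spanning trees. -/
noncomputable def treeCount : ℕ :=
  Nat.card {S : Finset G.E // G.IsSpanningTree S}

/-- The number of spanning 2-forests separating `u` and `v`. -/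
noncomputable def twoForestCount (u v : G.V) : ℕ :=
  Nat.card {S : Finset G.E // G.IsTwoForest u v S}

end Multigraph

/-- The cycle graph on vertices `v₁, …, v_n` (encoded as `Fin n`, `v_i` corresponding to
index `i - 1`, edges `{v_i, v_{i+1}}` with indices mod `n`) together with one extra
chord joining the vertices with indices `a` and `b`. -/
def cycleChord (n a b : ℕ) (hn : 0 < n) (ha : a < n) (hb : b < n) : Multigraph where
  V := Fin n
  E := Fin n ⊕ Unit
  ends := fun e =>
    match e with
    | .inl i => s(i, (⟨(i.1 + 1) % n, Nat.mod_lt _ hn⟩ : Fin n))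
    | .inr _ => s((⟨a, ha⟩ : Fin n), (⟨b, hb⟩ : Fin n))

/-
Every edge of `X` joins two consecutive cycle vertices `j, j + 1`; call `j` its slot. The slot
`a = i - 1` of the chord carries two parallel edges, every other slot exactly one. Removing two
slots `A < B` from the edge set splits the cycle into the arcs `(A, B]` and its complement, and no
path crosses a removed slot. Hence an edge set is a spanning 2-forest separating `v₁` and `v_t`
iff it uses at most one edge per slot and misses exactly two slots, one on each of the two arcs
between `v₁` and `v_t`. There are `t - 1` choices for the missed slot `p` on the first arc and
`n - t + 1` for the missed slot `q` on the second, and for `p ≠ a` two choices of which parallel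
edge to keep: `((t - 1) + (t - 2)) (n - t + 1)` forests in all.
-/

namespace Multigraph

variable {G : Multigraph} {S : Set G.E} {x y : G.V}

theorem Reach.symm (h : G.Reach S x y) : G.Reach S y x :=
  (@Relation.ReflTransGen.stdSymm _ _
    ⟨fun _ _ ⟨e, he, hends⟩ => ⟨e, he, hends.trans Sym2.eq_swap⟩⟩).symm _ _ h

theorem Reach.iff_of_forall_ends {P : G.V → Prop}
    (hP : ∀ e ∈ S, ∀ x y, G.ends e = s(x, y) → (P x ↔ P y)) (h : G.Reach S x y) :
    P x ↔ P y := by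
  induction h with
  | refl => rfl
  | tail _ hstep ih =>
    obtain ⟨e, he, hends⟩ := hstep
    exact ih.trans (hP e he _ _ hends)

end Multigraph

/-- `cycleChord n a (a + 1)`, restated so that its vertex and edge types unfold reducibly to
`Fin n` and `Fin n ⊕ Unit` (which `rw` and `simp` need). -/
abbrev cycleDoubled (n a : ℕ) (h : a + 1 < n) : Multigraph where
  V := Fin n
  E := Fin n ⊕ Unit
  ends := (cycleChord n a (a + 1) (by omega) (by omega) h).ends

namespace cycleDoubled

open Multigraph

variable {n a : ℕ}

def slot (a : ℕ) : Fin n ⊕ Unit → ℕ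
  | .inl j => j
  | .inr _ => a

theorem slot_lt (ha : a < n) (e : Fin n ⊕ Unit) : slot a e < n := by
  cases e <;> simp [slot, ha]

def IsGap (a : ℕ) (S : Finset (Fin n ⊕ Unit)) (j : ℕ) : Prop :=
  ∀ e ∈ S, slot a e ≠ j

section Reach

variable (h : a + 1 < n)

theorem ends_inl (j : Fin n) :
    (cycleDoubled n a h).ends (.inl j) = s(j, ⟨(j.1 + 1) % n, Nat.mod_lt _ (by omega)⟩) := rfl

theorem ends_inr : (cycleDoubled n a h).ends (.inr ()) = s(⟨a, by omega⟩, ⟨a + 1, h⟩) := rfl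

theorem ends_eq_iff {e : Fin n ⊕ Unit} {x y : Fin n} :
    (cycleDoubled n a h).ends e = s(x, y) ↔
      x.1 = slot a e ∧ (y.1 = x.1 + 1 ∨ x.1 + 1 = n ∧ y.1 = 0) ∨
      y.1 = slot a e ∧ (x.1 = y.1 + 1 ∨ y.1 + 1 = n ∧ x.1 = 0) := by
  have := x.isLt
  have := y.isLt
  rcases e with j | ⟨⟩
  · have hmod : j.1 + 1 < n ∧ (j.1 + 1) % n = j.1 + 1 ∨ j.1 + 1 = n ∧ (j.1 + 1) % n = 0 := by
      rcases Nat.lt_or_ge (j.1 + 1) n with hlt | hge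
      · exact .inl ⟨hlt, Nat.mod_eq_of_lt hlt⟩
      · exact .inr ⟨by omega, by rw [show j.1 + 1 = n by omega, Nat.mod_self]⟩
    rw [ends_inl]
    simp only [Sym2.eq_iff, Fin.ext_iff, slot]
    omega
  · rw [ends_inr]
    simp only [Sym2.eq_iff, Fin.ext_iff, slot]
    omega

theorem ends_eq_of_slot_eq {e e' : Fin n ⊕ Unit} (hslot : slot a e = slot a e') :
    (cycleDoubled n a h).ends e = (cycleDoubled n a h).ends e' := by
  obtain ⟨⟨x, y⟩, hxy⟩ := Sym2.mk_surjective ((cycleDoubled n a h).ends e')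
  change s(x, y) = _ at hxy
  rw [← hxy, ends_eq_iff, hslot, ← ends_eq_iff h, hxy]

variable {S : Finset (Fin n ⊕ Unit)} {x y : Fin n}

theorem reach_of_not_isGap (hx : ¬IsGap a S x.1)
    (hy : y.1 = x.1 + 1 ∨ x.1 + 1 = n ∧ y.1 = 0) : (cycleDoubled n a h).Reach ↑S x y := by
  simp only [IsGap, not_forall, not_not] at hx
  obtain ⟨e, he, hslot⟩ := hx
  exact .single ⟨e, he, (ends_eq_iff h).2 (.inl ⟨hslot.symm, hy⟩)⟩

theorem reach_of_forall_not_isGap (hxy : x.1 ≤ y.1)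
    (hS : ∀ j, x.1 ≤ j → j < y.1 → ¬IsGap a S j) : (cycleDoubled n a h).Reach ↑S x y := by
  obtain ⟨d, hd⟩ := Nat.exists_eq_add_of_le hxy
  induction d generalizing y with
  | zero => exact Fin.ext hd.symm ▸ .refl
  | succ d ih =>
    have hlast : x.1 + d < n := by omega
    exact (ih (y := ⟨x.1 + d, hlast⟩) (by simp) (fun j hj hj' => hS j hj (by simp at hj'; omega))
      rfl).trans (reach_of_not_isGap h (hS _ (by simp) (by simp; omega)) (.inl (by simp; omega)))

theorem reach_zero_of_forall_not_isGap (hS : ∀ j, x.1 ≤ j → j < n → ¬IsGap a S j) :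
    (cycleDoubled n a h).Reach ↑S x ⟨0, by omega⟩ :=
  (reach_of_forall_not_isGap h (y := ⟨n - 1, by omega⟩) (by simp; omega)
    fun j hj hj' => hS j hj (by simp at hj'; omega)).trans
    (reach_of_not_isGap h (hS _ (by simp; omega) (by simp; omega)) (.inr ⟨by simp; omega, rfl⟩))

theorem mem_Ioc_iff_of_reach {A B : ℕ} (hB : B < n) (hAgap : IsGap a S A)
    (hBgap : IsGap a S B) (hxy : (cycleDoubled n a h).Reach ↑S x y) :
    x.1 ∈ Set.Ioc A B ↔ y.1 ∈ Set.Ioc A B := by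
  refine hxy.iff_of_forall_ends (P := fun v : Fin n => v.1 ∈ Set.Ioc A B)
    fun e he u w hends => ?_
  have := slot_lt (by omega) e
  have := hAgap e he
  have := hBgap e he
  rw [ends_eq_iff] at hends
  simp only [Set.mem_Ioc]
  omega

theorem mem_Ioc_of_isGap {v : Fin n}
    (hcov : ∀ x, (cycleDoubled n a h).Reach ↑S ⟨0, by omega⟩ x ∨ (cycleDoubled n a h).Reach ↑S v x)
    {A B : ℕ} (hAB : A < B) (hB : B < n) (hAgap : IsGap a S A) (hBgap : IsGap a S B) :
    v.1 ∈ Set.Ioc A B := by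
  have hBmem : B ∈ Set.Ioc A B := ⟨hAB, le_rfl⟩
  rcases hcov ⟨B, hB⟩ with hreach | hreach
  · simpa using (mem_Ioc_iff_of_reach h hB hAgap hBgap hreach).2 hBmem
  · exact (mem_Ioc_iff_of_reach h hB hAgap hBgap hreach).2 hBmem

theorem injOn_slot_of_isForest (hS : (cycleDoubled n a h).IsForest S) :
    Set.InjOn (slot a) (S : Set (Fin n ⊕ Unit)) := by
  intro e he e' he' hslot
  by_contra hne
  obtain ⟨⟨x, y⟩, hxy⟩ := Sym2.mk_surjective ((cycleDoubled n a h).ends e)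
  exact hS e he x y hxy.symm
    (.single ⟨e', ⟨he', fun h' => hne h'.symm⟩, (ends_eq_of_slot_eq h hslot.symm).trans hxy.symm⟩)

/-- Deleting `e` opens the gap `slot a e` next to the gap `c`, which separates the ends of `e`. -/
theorem isForest_of_injOn {c : ℕ} (hinj : Set.InjOn (slot a) (S : Set (Fin n ⊕ Unit)))
    (hc : c < n) (hcgap : IsGap a S c) : (cycleDoubled n a h).IsForest S := by
  intro e he x y hends hreach
  rw [← Finset.coe_erase] at hreach
  have hslot : IsGap a (S.erase e) (slot a e) := fun e' he' hslot =>
    (Finset.mem_erase.1 he').1 (hinj (Finset.mem_of_mem_erase he') he hslot)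
  have hc' : IsGap a (S.erase e) c := fun e' he' => hcgap e' (Finset.mem_of_mem_erase he')
  have := hcgap e he
  have := slot_lt (by omega) e
  have h1 := mem_Ioc_iff_of_reach h hc hslot hc' hreach
  have h2 := mem_Ioc_iff_of_reach h (slot_lt (by omega) e) hc' hslot hreach
  rw [ends_eq_iff] at hends
  simp only [Set.mem_Ioc] at h1 h2
  omega

theorem eq_or_eq_of_isGap {v : Fin n}
    (hcov : ∀ x, (cycleDoubled n a h).Reach ↑S ⟨0, by omega⟩ x ∨ (cycleDoubled n a h).Reach ↑S v x)
    {p q j : ℕ} (hpv : p < v.1) (hvq : v.1 ≤ q) (hqn : q < n) (hp : IsGap a S p)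
    (hq : IsGap a S q) (hjn : j < n) (hj : IsGap a S j) : j = p ∨ j = q := by
  by_contra! hne
  obtain hjp | hpj := Nat.lt_or_gt_of_ne hne.1
  · exact absurd (mem_Ioc_of_isGap h hcov hjp (by omega) hj hp).2 (by omega)
  obtain hjv | hvj := Nat.lt_or_ge j v.1
  · exact absurd (mem_Ioc_of_isGap h hcov hpj hjn hp hj).2 (by omega)
  obtain hjq | hqj := Nat.lt_or_gt_of_ne hne.2
  · exact absurd (mem_Ioc_of_isGap h hcov hjq hqn hj hq).1 (by omega)
  · exact absurd (mem_Ioc_of_isGap h hcov hqj hjn hq hj).1 (by omega)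

theorem reach_or_reach_of_forall_not_isGap {v : Fin n} {p q : ℕ} (hpv : p < v.1) (hvq : v.1 ≤ q)
    (hgap : ∀ j, j < n → j ≠ p → j ≠ q → ¬IsGap a S j) (x : Fin n) :
    (cycleDoubled n a h).Reach ↑S ⟨0, by omega⟩ x ∨ (cycleDoubled n a h).Reach ↑S v x := by
  rcases Nat.lt_or_ge p x.1 with hpx | hxp
  · rcases Nat.lt_or_ge q x.1 with hqx | hxq
    · exact .inl (reach_zero_of_forall_not_isGap h fun j hj hjn =>
        hgap j hjn (by omega) (by omega)).symm
    rcases Nat.lt_or_ge x.1 v.1 with hxv | hvx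
    · exact .inr (reach_of_forall_not_isGap h hxv.le fun j hj hj' =>
        hgap j (by omega) (by omega) (by omega)).symm
    · exact .inr (reach_of_forall_not_isGap h hvx fun j hj hj' =>
        hgap j (by omega) (by omega) (by omega))
  · exact .inl (reach_of_forall_not_isGap h (Nat.zero_le _) fun j _ hj =>
      hgap j (by omega) (by omega) (by omega))

theorem isTwoForest_iff {v : Fin n} :
    (cycleDoubled n a h).IsTwoForest ⟨0, by omega⟩ v S ↔
      Set.InjOn (slot a) (S : Set (Fin n ⊕ Unit)) ∧
        ∃ p q, p < v.1 ∧ v.1 ≤ q ∧ q < n ∧ ∀ j < n, IsGap a S j ↔ j = p ∨ j = q := by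
  constructor
  · rintro ⟨hforest, hsep, hcov⟩
    obtain ⟨p, hpv, hp⟩ : ∃ p < v.1, IsGap a S p := by
      by_contra! hno
      exact hsep (reach_of_forall_not_isGap h (Nat.zero_le _) fun j _ hj => hno j hj)
    obtain ⟨q, hvq, hqn, hq⟩ : ∃ q, v.1 ≤ q ∧ q < n ∧ IsGap a S q := by
      by_contra! hno
      exact hsep (reach_zero_of_forall_not_isGap h hno).symm
    exact ⟨injOn_slot_of_isForest h hforest, p, q, hpv, hvq, hqn, fun j hj =>
      ⟨eq_or_eq_of_isGap h hcov hpv hvq hqn hp hq hj, by rintro (rfl | rfl) <;> assumption⟩⟩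
  · rintro ⟨hinj, p, q, hpv, hvq, hqn, hgaps⟩
    have hp := (hgaps p (by omega)).2 (.inl rfl)
    have hq := (hgaps q hqn).2 (.inr rfl)
    refine ⟨isForest_of_injOn h hinj hqn hq, fun hreach => ?_,
      reach_or_reach_of_forall_not_isGap h hpv hvq fun j hj hjp hjq hgap => ?_⟩
    · have := mem_Ioc_iff_of_reach h hqn hp hq hreach
      simp only [Set.mem_Ioc] at this
      omega
    · rcases (hgaps j hj).1 hgap with rfl | rfl <;> contradiction

end Reach

def avoiding (a p q : ℕ) (d : Fin n ⊕ Unit) : Finset (Fin n ⊕ Unit) :=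
  {e | slot a e ≠ p ∧ slot a e ≠ q ∧ e ≠ d}

variable {p q : ℕ} {d e : Fin n ⊕ Unit}

theorem mem_avoiding : e ∈ avoiding a p q d ↔ slot a e ≠ p ∧ slot a e ≠ q ∧ e ≠ d := by
  simp [avoiding]

theorem eq_or_eq_of_slot_eq {e' : Fin n ⊕ Unit} (hd : slot a d = a)
    (hslot : slot a e = slot a e') : e = e' ∨ e = d ∨ e' = d := by
  rcases e with j | ⟨⟩ <;> rcases e' with j' | ⟨⟩ <;> rcases d with k | ⟨⟩ <;>
    simp_all [slot, Fin.ext_iff]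

theorem injOn_slot_avoiding (hd : slot a d = a) :
    Set.InjOn (slot a) (avoiding a p q d : Set (Fin n ⊕ Unit)) := by
  intro e he e' he' hslot
  rw [Finset.mem_coe, mem_avoiding] at he he'
  rcases eq_or_eq_of_slot_eq hd hslot with h | h | h
  · exact h
  · exact absurd h he.2.2
  · exact absurd h he'.2.2

theorem isGap_avoiding_iff (hd : slot a d = a) {j : ℕ} (hj : j < n) :
    IsGap a (avoiding a p q d) j ↔ j = p ∨ j = q := by
  simp only [IsGap, mem_avoiding]
  constructor
  · intro hgap
    by_contra! hne
    by_cases hjd : .inl ⟨j, hj⟩ = d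
    · subst hjd
      simp only [slot] at hd
      exact hgap (.inr ()) ⟨by simp [slot]; omega, by simp [slot]; omega, by simp⟩ hd.symm
    · exact hgap (.inl ⟨j, hj⟩) ⟨hne.1, hne.2, hjd⟩ rfl
  · rintro (rfl | rfl) e he
    exacts [he.1, he.2.1]

theorem eq_avoiding (ha : a < n) {S : Finset (Fin n ⊕ Unit)}
    (hgaps : ∀ j < n, IsGap a S j ↔ j = p ∨ j = q) (hd : slot a d = a) (hdS : d ∉ S) :
    S = avoiding a p q d := by
  ext e
  have hgap := hgaps (slot a e) (slot_lt ha e)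
  rw [mem_avoiding]
  constructor
  · intro he
    have : ¬IsGap a S (slot a e) := fun hg => hg e he rfl
    rw [hgap] at this
    push Not at this
    exact ⟨this.1, this.2, ne_of_mem_of_not_mem he hdS⟩
  · rintro ⟨hp, hq, hne⟩
    have : ¬IsGap a S (slot a e) := by rw [hgap]; tauto
    simp only [IsGap, not_forall, not_not] at this
    obtain ⟨e', he', hslot⟩ := this
    rcases eq_or_eq_of_slot_eq hd hslot with rfl | rfl | rfl
    · exact he'
    · exact absurd he' hdS
    · exact absurd rfl hne

theorem slots_eq_of_avoiding_eq {v p' q' : ℕ} {d' : Fin n ⊕ Unit}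
    (hd : slot a d = a) (hd' : slot a d' = a) (hp : p < v) (hq : v ≤ q) (hqn : q < n)
    (hp' : p' < v) (hq' : v ≤ q') (heq : avoiding a p q d = avoiding a p' q' d') :
    p = p' ∧ q = q' := by
  have hgaps := fun j (hj : j < n) =>
    (isGap_avoiding_iff hd hj).symm.trans (heq ▸ isGap_avoiding_iff hd' hj)
  have hp_gap := (hgaps p (by omega)).1 (.inl rfl)
  have hq_gap := (hgaps q hqn).1 (.inr rfl)
  omega

/-- `.inl (p, q)` indexes the forest without the chord, `.inr (p, q)` the one keeping it; for
`p = a` both parallel edges lie in the missed slot, hence the `erase a`. -/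
def forestIndex (a v n : ℕ) : Finset ((ℕ × ℕ) ⊕ (ℕ × ℕ)) :=
  (Finset.range v ×ˢ Finset.Ico v n).disjSum ((Finset.range v).erase a ×ˢ Finset.Ico v n)

def forestOfIndex (a : ℕ) (ha : a < n) : (ℕ × ℕ) ⊕ (ℕ × ℕ) → Finset (Fin n ⊕ Unit) :=
  Sum.elim (fun pq => avoiding a pq.1 pq.2 (.inr ()))
    (fun pq => avoiding a pq.1 pq.2 (.inl ⟨a, ha⟩))

theorem injOn_forestOfIndex {v : ℕ} (ha : a < n) (hav : a < v) :
    Set.InjOn (forestOfIndex a ha) (forestIndex a v n) := by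
  rintro (⟨p, q⟩ | ⟨p, q⟩) hx (⟨p', q'⟩ | ⟨p', q'⟩) hy hxy <;>
    simp only [forestIndex, Finset.mem_coe, Finset.inl_mem_disjSum, Finset.inr_mem_disjSum,
      Finset.mem_product, Finset.mem_range, Finset.mem_Ico, Finset.mem_erase] at hx hy
  · obtain ⟨rfl, rfl⟩ := slots_eq_of_avoiding_eq rfl rfl hx.1 hx.2.1 hx.2.2 hy.1 hy.2.1 hxy
    rfl
  · have hchord := congrArg (Sum.inr () ∈ ·) hxy
    simp [forestOfIndex, mem_avoiding, slot] at hchord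
    omega
  · have hchord := congrArg (Sum.inr () ∈ ·) hxy
    simp [forestOfIndex, mem_avoiding, slot] at hchord
    omega
  · obtain ⟨rfl, rfl⟩ := slots_eq_of_avoiding_eq rfl rfl hx.1.2 hx.2.1 hx.2.2 hy.1.2 hy.2.1 hxy
    rfl

variable (h : a + 1 < n)

theorem isTwoForest_iff_mem_image {v : ℕ} (hvn : v < n) {S : Finset (Fin n ⊕ Unit)} :
    (cycleDoubled n a h).IsTwoForest ⟨0, by omega⟩ ⟨v, hvn⟩ S ↔
      S ∈ (forestIndex a v n).image (forestOfIndex a (by omega)) := by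
  rw [isTwoForest_iff, Finset.mem_image, Fin.val_mk]
  constructor
  · rintro ⟨hinj, p, q, hpv, hvq, hqn, hgaps⟩
    by_cases hchord : .inr () ∈ S
    · have hpa : p ≠ a := fun hpa =>
        ((hgaps p (by omega)).2 (.inl rfl)) (.inr ()) hchord hpa.symm
      have hcycle : .inl ⟨a, by omega⟩ ∉ S := fun hcycle =>
        Sum.inl_ne_inr (hinj hcycle hchord rfl)
      exact ⟨.inr (p, q), by simp [forestIndex]; omega,
        (eq_avoiding (by omega) hgaps rfl hcycle).symm⟩
    · exact ⟨.inl (p, q), by simp [forestIndex]; omega,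
        (eq_avoiding (by omega) hgaps rfl hchord).symm⟩
  · rintro ⟨⟨p, q⟩ | ⟨p, q⟩, hx, rfl⟩ <;> simp [forestIndex] at hx <;>
      exact ⟨injOn_slot_avoiding rfl, p, q, by omega, by omega, by omega,
        fun j hj => isGap_avoiding_iff rfl hj⟩

theorem twoForestCount_eq {v : ℕ} (hav : a < v) (hvn : v < n) :
    (cycleDoubled n a h).twoForestCount ⟨0, by omega⟩ ⟨v, hvn⟩ = (2 * v - 1) * (n - v) := by
  calc (cycleDoubled n a h).twoForestCount ⟨0, by omega⟩ ⟨v, hvn⟩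
      = ((forestIndex a v n).image (forestOfIndex a (by omega))).card := by
        rw [twoForestCount, ← Nat.card_eq_finsetCard]
        exact Nat.card_congr (Equiv.subtypeEquivRight fun S => isTwoForest_iff_mem_image h hvn)
    _ = (forestIndex a v n).card := Finset.card_image_of_injOn (injOn_forestOfIndex _ hav)
    _ = v * (n - v) + (v - 1) * (n - v) := by
        simp [forestIndex, Finset.card_erase_of_mem (Finset.mem_range.2 hav)]
    _ = (2 * v - 1) * (n - v) := by rw [← add_mul]; congr 1; omega

end cycleDoubled

/-- Adding a chord between adjacent cycle vertices `v_i, v_{i+1}` with `1 ≤ i < t`,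
`3 ≤ t ≤ ⌈n/2⌉` and `(i, t) ≠ (1, 2)`: the number of spanning 2-forests separating
`v₁` and `v_t` equals `(2t - 3)(n - t + 1)`. -/
theorem stmt_4 (n t i : ℕ) (ht : t ≤ (n + 1) / 2)
    (hi1 : 1 ≤ i) (hit : i < t) :
    (cycleChord n (i - 1) i (by omega) (by omega) (by omega)).twoForestCount
        ⟨0, by omega⟩ ⟨t - 1, by omega⟩ =
      (2 * t - 3) * (n - t + 1) := by
  obtain ⟨a, rfl⟩ : ∃ a, i = a + 1 := ⟨i - 1, by omega⟩
  rw [show 2 * t - 3 = 2 * (t - 1) - 1 by omega, show n - t + 1 = n - (t - 1) by omega]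
  exact cycleDoubled.twoForestCount_eq (by omega) (by omega) (by omega)
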